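/- Under the hypotheses of the low-gain design (A Schur stable, G_d(1) full column rank, L = G_d(1)^†, ε ∈ (0, ε*)), the estimator x̂(t+1) = A x̂(t) + B u(t) + B_d d̂(t), ŷ(t) = C x̂(t) + D u(t), d̂(t+1) = d̂(t) − εL(ŷ(t) − y(t)) satisfies lim_{t→∞} (d̂(t) − d) = 0 for every constant disturbance d ∈ ℝ^q, every input sequence u, and all initial conditions. -/

import Mathlib

/-!
With `e = x̂ - x` and `δ = d̂ - d` one has `e⁺ = A e + B_d δ` and `δ⁺ = δ - ε L C e`.
Put `K₀ = (1 - A)⁻¹ B_d`; then `L C K₀ = L G = 1`, and the deviation `w = e - K₀ δ` of the state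
error from its quasi-steady value satisfies `w⁺ = A w + ε K₀ L C e`, while
`δ⁺ = (1 - ε) δ - ε L C w`. By Gelfand's formula some power of the Schur matrix `A` is a strict
contraction, which yields a seminorm `N`, equivalent to the sup norm, with `N (A v) ≤ r N v`,
`r < 1`. So `w` contracts at rate `r + O(ε)` up to an `O(ε) ‖δ‖` input, and `δ` at rate `1 - ε`
up to an `O(ε) N w` input; for small `ε` the function `‖δ‖ + β N w` decays geometrically.
-/

open Filter Finset Matrix
open scoped NNReal Topology

attribute [local instance] Matrix.linftyOpNormedAddCommGroup Matrix.linftyOpNormedRing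
  Matrix.linftyOpNormedAlgebra

theorem spectrum.exists_pow_norm_le_of_forall_norm_lt_one {𝔸 : Type*} [NormedRing 𝔸]
    [NormedAlgebra ℂ 𝔸] [CompleteSpace 𝔸] (a : 𝔸) (h : ∀ μ ∈ spectrum ℂ a, ‖μ‖ < 1) :
    ∃ r : ℝ≥0, r ≠ 0 ∧ r < 1 ∧ ∃ K, 1 ≤ K ∧ ‖a ^ K‖ ≤ r ^ K := by
  rcases subsingleton_or_nontrivial 𝔸 with h𝔸 | h𝔸
  · exact ⟨2⁻¹, by norm_num, by norm_num, 1, le_rfl, by simp [Subsingleton.elim (a ^ 1) 0]⟩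
  have hρ : spectralRadius ℂ a < (1 : ℝ≥0) :=
    spectrum.spectralRadius_lt_of_forall_lt a fun z hz => by exact_mod_cast h z hz
  obtain ⟨r, hρr, hr1⟩ := ENNReal.lt_iff_exists_nnreal_btwn.mp hρ
  obtain ⟨K, hK1, hK⟩ := ((eventually_ge_atTop 1).and
    ((spectrum.pow_nnnorm_pow_one_div_tendsto_nhds_spectralRadius a).eventually_lt_const
      hρr)).exists
  have hK0 : (0 : ℝ) < K := by exact_mod_cast hK1
  rw [one_div, ENNReal.rpow_inv_lt_iff hK0, ENNReal.rpow_natCast] at hK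
  refine ⟨r, by exact_mod_cast (pos_of_gt hρr).ne', by exact_mod_cast hr1, K, hK1, ?_⟩
  exact_mod_cast hK.le

namespace Matrix

theorem mul_one_sub_inv_mul {ι κ R : Type*} [Fintype ι] [DecidableEq ι] [CommRing R] {A : Matrix ι ι R} (hA : IsUnit (1 - A))
    (B : Matrix ι κ R) : A * ((1 - A)⁻¹ * B) = (1 - A)⁻¹ * B - B := by
  set X := (1 - A)⁻¹ * B
  have hX : (1 - A) * X = B := mul_nonsing_inv_cancel_left _ _ ((isUnit_iff_isUnit_det _).mp hA)
  rw [← hX, Matrix.sub_mul, Matrix.one_mul, sub_sub_cancel]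

variable {ι κ : Type*} [Fintype ι] [Fintype κ]

theorem isUnit_of_rank_eq_card [DecidableEq κ] {𝕜 : Type*} [Field 𝕜] {M : Matrix κ κ 𝕜}
    (h : M.rank = Fintype.card κ) : IsUnit M := by
  rw [← mulVec_surjective_iff_isUnit]
  have : LinearMap.range M.mulVecLin = ⊤ :=
    Submodule.eq_top_of_finrank_eq (by rw [← rank, h, Module.finrank_fintype_fun_eq_card])
  exact LinearMap.range_eq_top.mp this

theorem isUnit_transpose_mul_self_of_rank_eq_card [DecidableEq κ] (G : Matrix ι κ ℝ)
    (h : G.rank = Fintype.card κ) : IsUnit (Gᵀ * G) :=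
  isUnit_of_rank_eq_card (by rw [rank_transpose_mul_self, h])

theorem linfty_opNorm_map_ofReal (A : Matrix ι κ ℝ) : ‖A.map ((↑) : ℝ → ℂ)‖ = ‖A‖ := by
  simp only [← coe_nnnorm, linfty_opNNNorm_def, map_apply, Complex.nnnorm_real]

variable [DecidableEq ι]

theorem isUnit_one_sub_of_spectrum (A : Matrix ι ι ℝ)
    (h : (1 : ℂ) ∉ spectrum ℂ (A.map ((↑) : ℝ → ℂ))) : IsUnit (1 - A) := by
  rw [spectrum.mem_iff, not_not, map_one] at h
  have : (1 : Matrix ι ι ℂ) - A.map (↑) = Complex.ofRealHom.mapMatrix (1 - A) := by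
    rw [map_sub, map_one]; rfl
  rw [this, isUnit_iff_isUnit_det, ← RingHom.map_det, isUnit_iff_ne_zero] at h
  rw [isUnit_iff_isUnit_det, isUnit_iff_ne_zero]
  simpa using h

/-- With `s = r⁻¹` and `‖A ^ K‖ ≤ r ^ K`, this is a norm in which `A` contracts by `r`. -/
noncomputable def adaptedSeminorm (A : Matrix ι ι ℝ) (s : ℝ≥0) (K : ℕ) : Seminorm ℝ (ι → ℝ) :=
  ∑ k ∈ range K, s ^ k • (normSeminorm ℝ (ι → ℝ)).comp (A ^ k).mulVecLin

variable (A : Matrix ι ι ℝ) (s : ℝ≥0)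

theorem adaptedSeminorm_apply (K : ℕ) (v : ι → ℝ) :
    adaptedSeminorm A s K v = ∑ k ∈ range K, (s : ℝ) ^ k * ‖(A ^ k) *ᵥ v‖ := by
  simp [adaptedSeminorm, NNReal.smul_def]

theorem norm_le_adaptedSeminorm {K : ℕ} (hK : 1 ≤ K) (v : ι → ℝ) :
    ‖v‖ ≤ adaptedSeminorm A s K v := by
  rw [adaptedSeminorm_apply]
  simpa using single_le_sum (f := fun k => (s : ℝ) ^ k * ‖(A ^ k) *ᵥ v‖)
    (fun k _ => by positivity) (mem_range.2 hK)

theorem adaptedSeminorm_le (K : ℕ) (v : ι → ℝ) :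
    adaptedSeminorm A s K v ≤ (∑ k ∈ range K, (s : ℝ) ^ k * ‖A ^ k‖) * ‖v‖ := by
  rw [adaptedSeminorm_apply, sum_mul]
  refine sum_le_sum fun k _ => ?_
  rw [mul_assoc]
  gcongr
  exact linfty_opNorm_mulVec _ _

theorem adaptedSeminorm_mulVec_le {r : ℝ≥0} (hr : r ≠ 0) {K : ℕ} (hK : ‖A ^ K‖ ≤ r ^ K)
    (v : ι → ℝ) : adaptedSeminorm A r⁻¹ K (A *ᵥ v) ≤ r * adaptedSeminorm A r⁻¹ K v := by
  set f : ℕ → ℝ := fun k => (r : ℝ)⁻¹ ^ k * ‖(A ^ k) *ᵥ v‖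
  have hr' : (r : ℝ) ≠ 0 := by exact_mod_cast hr
  have hfK : f K ≤ f 0 := by
    calc (r : ℝ)⁻¹ ^ K * ‖(A ^ K) *ᵥ v‖ ≤ (r : ℝ)⁻¹ ^ K * (r ^ K * ‖v‖) := by
          gcongr
          exact (linfty_opNorm_mulVec _ _).trans (mul_le_mul_of_nonneg_right hK (norm_nonneg _))
      _ = f 0 := by simp [f, hr']
  have hshift : ∑ k ∈ range K, f (k + 1) ≤ ∑ k ∈ range K, f k := by
    have := (sum_range_succ' f K).symm.trans (sum_range_succ f K)
    linarith
  calc adaptedSeminorm A r⁻¹ K (A *ᵥ v) = r * ∑ k ∈ range K, f (k + 1) := by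
        rw [adaptedSeminorm_apply, mul_sum]
        refine sum_congr rfl fun k _ => ?_
        simp only [f, mulVec_mulVec, ← pow_succ, NNReal.coe_inv]
        rw [pow_succ (r : ℝ)⁻¹]
        field_simp
    _ ≤ r * adaptedSeminorm A r⁻¹ K v := by
        simp only [adaptedSeminorm_apply, NNReal.coe_inv]
        exact mul_le_mul_of_nonneg_left hshift r.2

theorem exists_seminorm_contraction
    (h : ∀ μ ∈ spectrum ℂ (A.map ((↑) : ℝ → ℂ)), ‖μ‖ < 1) :
    ∃ r < (1 : ℝ), ∃ (N : Seminorm ℝ (ι → ℝ)) (c : ℝ), 0 ≤ c ∧ (∀ v, ‖v‖ ≤ N v) ∧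
      (∀ v, N v ≤ c * ‖v‖) ∧ ∀ v, N (A *ᵥ v) ≤ r * N v := by
  obtain ⟨r, hr0, hr1, K, hK1, hK⟩ := spectrum.exists_pow_norm_le_of_forall_norm_lt_one _ h
  have hAK : ‖A ^ K‖ ≤ r ^ K := by
    have hpow : A.map ((↑) : ℝ → ℂ) ^ K = (A ^ K).map (↑) :=
      (map_pow Complex.ofRealHom.mapMatrix A K).symm
    rwa [hpow, linfty_opNorm_map_ofReal] at hK
  exact ⟨r, by exact_mod_cast hr1, adaptedSeminorm A r⁻¹ K, _, by positivity,
    norm_le_adaptedSeminorm A _ hK1, adaptedSeminorm_le A _ K, adaptedSeminorm_mulVec_le A hr0 hAK⟩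

end Matrix

theorem tendsto_zero_of_le_of_le_mul {a V : ℕ → ℝ} {γ : ℝ} (hγ0 : 0 ≤ γ) (hγ1 : γ < 1)
    (ha : ∀ t, 0 ≤ a t) (haV : ∀ t, a t ≤ V t) (hV : ∀ t, V (t + 1) ≤ γ * V t) :
    Tendsto a atTop (𝓝 0) :=
  squeeze_zero ha (fun t => (haV t).trans (le_geom hγ0 t fun k _ => hV k)) <| by
    simpa using (tendsto_pow_atTop_nhds_zero_of_lt_one hγ0 hγ1).mul_const (V 0)

theorem exists_tendsto_zero_of_two_time_scale {r c₁ c₂ c₃ : ℝ} (hr : r < 1) (hc₁ : 0 ≤ c₁)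
    (hc₂ : 0 ≤ c₂) (hc₃ : 0 ≤ c₃) :
    ∃ εstar ∈ Set.Ioc (0 : ℝ) 1, ∀ ε ∈ Set.Ioo 0 εstar, ∀ a b : ℕ → ℝ,
      (∀ t, 0 ≤ a t) → (∀ t, 0 ≤ b t) →
      (∀ t, a (t + 1) ≤ (1 - ε) * a t + ε * c₁ * b t) →
      (∀ t, b (t + 1) ≤ (r + ε * c₂) * b t + ε * c₃ * a t) →
      Tendsto a atTop (𝓝 0) := by
  -- Lyapunov function `a + β b`: `β` tames the coupling `c₃`, then small `ε` tames `c₁, c₂`.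
  set β : ℝ := 1 / (2 * (c₃ + 1))
  have hβ : 0 < β := by positivity
  have hβc₃ : β * c₃ ≤ 1 / 2 := by
    rw [div_mul_eq_mul_div, one_mul, div_le_div_iff₀ (by positivity) two_pos]
    linarith
  have hden : 0 < 2 * (c₁ + β * c₂ + 1) := by positivity
  refine ⟨min 1 ((1 - r) * β / (2 * (c₁ + β * c₂ + 1))),
    ⟨lt_min one_pos (div_pos (mul_pos (by linarith) hβ) hden), min_le_left _ _⟩, ?_⟩
  rintro ε ⟨hε0, hε⟩ a b ha hb hab hba
  have hcoupling : ε * (c₁ + β * c₂) ≤ (1 - r) * β / 2 := by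
    have := (lt_div_iff₀ hden).mp (hε.trans_le (min_le_right _ _))
    nlinarith
  set γ := max (1 - ε / 2) ((1 + r) / 2)
  refine tendsto_zero_of_le_of_le_mul (V := fun t => a t + β * b t) (γ := γ)
    ((by linarith [hε.trans_le (min_le_left _ _)] : (0 : ℝ) ≤ 1 - ε / 2).trans (le_max_left _ _))
    (max_lt (by linarith) (by linarith)) ha (fun t => le_add_of_nonneg_right (by nlinarith [hb t]))
    fun t => ?_
  have h₁ : 1 - ε + ε * (β * c₃) ≤ γ := by
    nlinarith [le_max_left (1 - ε / 2) ((1 + r) / 2)]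
  have h₂ : β * r + ε * (c₁ + β * c₂) ≤ γ * β := by
    nlinarith [le_max_right (1 - ε / 2) ((1 + r) / 2)]
  calc a (t + 1) + β * b (t + 1)
      ≤ (1 - ε + ε * (β * c₃)) * a t + (β * r + ε * (c₁ + β * c₂)) * b t := by
        nlinarith [hab t, hba t]
    _ ≤ γ * a t + γ * β * b t := by gcongr <;> [exact ha t; exact hb t]
    _ = γ * (a t + β * b t) := by ring

namespace LowGain

variable {ι κ : Type*} [Fintype ι] [Fintype κ]
-- In the application `K₀ = (1 - A)⁻¹ B_d`, `F = L C`, `e = x̂ - x`, `δ = d̂ - d`.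
variable {A : Matrix ι ι ℝ} {Bd K₀ : Matrix ι κ ℝ} {F : Matrix κ ι ℝ} {ε : ℝ}

theorem disturbance_update_eq [DecidableEq κ] (hF : F * K₀ = 1) (e : ι → ℝ) (δ : κ → ℝ) :
    δ - ε • F *ᵥ e = (1 - ε) • δ - ε • F *ᵥ (e - K₀ *ᵥ δ) := by
  rw [mulVec_sub, mulVec_mulVec, hF, one_mulVec, smul_sub, sub_smul, one_smul]
  abel

theorem deviation_update_eq (hA : A * K₀ = K₀ - Bd) (e : ι → ℝ) (δ : κ → ℝ) :
    A *ᵥ e + Bd *ᵥ δ - K₀ *ᵥ (δ - ε • F *ᵥ e) = A *ᵥ (e - K₀ *ᵥ δ) + ε • (K₀ * F) *ᵥ e := by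
  rw [mulVec_sub A, mulVec_mulVec, hA, sub_mulVec, mulVec_sub, mulVec_smul, mulVec_mulVec]
  abel

theorem norm_disturbance_update_le [DecidableEq κ] (hF : F * K₀ = 1) (hε0 : 0 ≤ ε) (hε1 : ε ≤ 1)
    {N : (ι → ℝ) → ℝ} (hN : ∀ v, ‖v‖ ≤ N v) (e : ι → ℝ) (δ : κ → ℝ) :
    ‖δ - ε • F *ᵥ e‖ ≤ (1 - ε) * ‖δ‖ + ε * ‖F‖ * N (e - K₀ *ᵥ δ) := by
  rw [disturbance_update_eq hF]
  calc ‖(1 - ε) • δ - ε • F *ᵥ (e - K₀ *ᵥ δ)‖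
      ≤ (1 - ε) * ‖δ‖ + ε * ‖F *ᵥ (e - K₀ *ᵥ δ)‖ := by
        refine (norm_sub_le _ _).trans_eq ?_
        rw [norm_smul, norm_smul, Real.norm_of_nonneg (by linarith), Real.norm_of_nonneg hε0]
    _ ≤ (1 - ε) * ‖δ‖ + ε * ‖F‖ * N (e - K₀ *ᵥ δ) := by
        rw [mul_assoc]
        gcongr
        exact (linfty_opNorm_mulVec _ _).trans (by gcongr; exact hN _)

theorem seminorm_deviation_update_le (hA : A * K₀ = K₀ - Bd) (hε0 : 0 ≤ ε)
    {N : Seminorm ℝ (ι → ℝ)} {r c : ℝ} (hN : ∀ v, ‖v‖ ≤ N v) (hNc : ∀ v, N v ≤ c * ‖v‖)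
    (hNA : ∀ v, N (A *ᵥ v) ≤ r * N v) (hc : 0 ≤ c) (e : ι → ℝ) (δ : κ → ℝ) :
    N (A *ᵥ e + Bd *ᵥ δ - K₀ *ᵥ (δ - ε • F *ᵥ e)) ≤
      (r + ε * (c * ‖K₀ * F‖)) * N (e - K₀ *ᵥ δ) + ε * (c * ‖K₀ * F‖ * ‖K₀‖) * ‖δ‖ := by
  have he : ‖e‖ ≤ N (e - K₀ *ᵥ δ) + ‖K₀‖ * ‖δ‖ :=
    calc ‖e‖ ≤ ‖e - K₀ *ᵥ δ‖ + ‖K₀ *ᵥ δ‖ := norm_le_norm_sub_add _ _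
      _ ≤ N (e - K₀ *ᵥ δ) + ‖K₀‖ * ‖δ‖ := add_le_add (hN _) (linfty_opNorm_mulVec _ _)
  rw [deviation_update_eq hA]
  calc N (A *ᵥ (e - K₀ *ᵥ δ) + ε • (K₀ * F) *ᵥ e)
      ≤ r * N (e - K₀ *ᵥ δ) + ε * (c * (‖K₀ * F‖ * ‖e‖)) := by
        refine (map_add_le_add _ _ _).trans (add_le_add (hNA _) ?_)
        rw [map_smul_eq_mul, Real.norm_of_nonneg hε0]
        gcongr
        exact (hNc _).trans (by gcongr; exact linfty_opNorm_mulVec _ _)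
    _ ≤ r * N (e - K₀ *ᵥ δ) + ε * (c * (‖K₀ * F‖ * (N (e - K₀ *ᵥ δ) + ‖K₀‖ * ‖δ‖))) := by
        gcongr
    _ = _ := by ring

end LowGain

/-- Low-gain disturbance estimator convergence: under the low-gain design hypotheses,
there exists `ε* > 0` such that for all `ε ∈ (0, ε*)`, the estimator
`x̂(t+1) = A x̂(t) + B u(t) + B_d d̂(t)`, `ŷ(t) = C x̂(t) + D u(t)`,
`d̂(t+1) = d̂(t) - εL(ŷ(t) - y(t))` satisfies `d̂(t) - d → 0` for every constant
disturbance `d`, every input sequence, and all initial conditions. -/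
theorem low_gain_estimator_converges
    {n q m p : ℕ} (A : Matrix (Fin n) (Fin n) ℝ)
    (B : Matrix (Fin n) (Fin m) ℝ) (Bd : Matrix (Fin n) (Fin q) ℝ)
    (C : Matrix (Fin p) (Fin n) ℝ) (D : Matrix (Fin p) (Fin m) ℝ)
    (hSchur : ∀ μ ∈ spectrum ℂ (A.map (Complex.ofReal ·)), ‖μ‖ < 1)
    (G : Matrix (Fin p) (Fin q) ℝ)
    (hG : G = C * ((1 : Matrix (Fin n) (Fin n) ℝ) - A)⁻¹ * Bd)
    (hrank : G.rank = q)
    (L : Matrix (Fin q) (Fin p) ℝ)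
    (hL : L = (G.transpose * G)⁻¹ * G.transpose) :
    ∃ εstar > (0 : ℝ), ∀ ε ∈ Set.Ioo (0 : ℝ) εstar,
      ∀ (d : Fin q → ℝ) (u : ℕ → Fin m → ℝ)
        (x xhat : ℕ → Fin n → ℝ) (dhat : ℕ → Fin q → ℝ)
        (y yhat : ℕ → Fin p → ℝ),
        (∀ t, x (t + 1) = A.mulVec (x t) + B.mulVec (u t) + Bd.mulVec d) →
        (∀ t, y t = C.mulVec (x t) + D.mulVec (u t)) →
        (∀ t, xhat (t + 1) = A.mulVec (xhat t) + B.mulVec (u t) + Bd.mulVec (dhat t)) →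
        (∀ t, yhat t = C.mulVec (xhat t) + D.mulVec (u t)) →
        (∀ t, dhat (t + 1) = dhat t - ε • L.mulVec (yhat t - y t)) →
        Filter.Tendsto (fun t => dhat t - d) Filter.atTop (nhds 0) := by
  obtain ⟨r, hr, N, c, hc, hN, hNc, hNA⟩ := A.exists_seminorm_contraction hSchur
  set K₀ := (1 - A)⁻¹ * Bd
  have hAK₀ : A * K₀ = K₀ - Bd :=
    mul_one_sub_inv_mul (A.isUnit_one_sub_of_spectrum fun h1 => by simpa using hSchur 1 h1) Bd
  have hLCK₀ : L * C * K₀ = 1 := by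
    have hGG := G.isUnit_transpose_mul_self_of_rank_eq_card (by simpa using hrank)
    rw [hL, Matrix.mul_assoc, ← Matrix.mul_assoc C, ← hG, Matrix.mul_assoc]
    exact nonsing_inv_mul _ ((isUnit_iff_isUnit_det _).mp hGG)
  obtain ⟨εstar, ⟨hεstar, hεstar1⟩, hconv⟩ := exists_tendsto_zero_of_two_time_scale hr
    (norm_nonneg (L * C)) (mul_nonneg hc (norm_nonneg (K₀ * (L * C))))
    (mul_nonneg (mul_nonneg hc (norm_nonneg (K₀ * (L * C)))) (norm_nonneg K₀))
  refine ⟨εstar, hεstar, fun ε hε d u x xhat dhat y yhat hx hy hxhat hyhat hdhat => ?_⟩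
  have he : ∀ t, xhat (t + 1) - x (t + 1) = A *ᵥ (xhat t - x t) + Bd *ᵥ (dhat t - d) := by
    intro t
    rw [hxhat, hx, mulVec_sub, mulVec_sub]
    abel
  have hδ : ∀ t, dhat (t + 1) - d = dhat t - d - ε • (L * C) *ᵥ (xhat t - x t) := by
    intro t
    rw [hdhat, hyhat, hy, add_sub_add_right_eq_sub, ← mulVec_sub, mulVec_mulVec]
    abel
  rw [tendsto_zero_iff_norm_tendsto_zero]
  refine hconv ε hε _ (fun t => N (xhat t - x t - K₀ *ᵥ (dhat t - d))) (fun _ => norm_nonneg _)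
    (fun _ => apply_nonneg _ _) (fun t => ?_) (fun t => ?_)
  · rw [hδ t]
    exact LowGain.norm_disturbance_update_le hLCK₀ hε.1.le (hε.2.le.trans hεstar1) hN _ _
  · rw [he t, hδ t]
    exact LowGain.seminorm_deviation_update_le hAK₀ hε.1.le hN hNc hNA hc _ _
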